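/- arXiv:0905.2078 — 3 statements merged into one kernel-verified Lean document; each statement's English description precedes it below -/
import Mathlib

section
/- Let λ^ε minimize λ ↦ P(ℓ∘f_λ) + ε·Σ λ_j log λ_j over Λ and let λ̂^ε minimize λ ↦ Pₙ(ℓ∘f_λ) + ε·Σ λ_j log λ_j over Λ. Then P((ℓ'∘f_{λ̂^ε}) − (ℓ'∘f_{λ^ε}))·(f_{λ̂^ε} − f_{λ^ε}) + ε·K(λ̂^ε, λ^ε) ≤ (P − Pₙ)((ℓ'∘f_{λ̂^ε})·(f_{λ̂^ε} − f_{λ^ε})), where K(λ,ν) := Σ_{j=1}^N (log(λ_j/ν_j))·(λ_j − ν_j) is the symmetrized Kullback–Leibler divergence. -/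
open MeasureTheory Real Finset
open scoped BigOperators

namespace EntropySparse

def simplex (N : ℕ) : Set (Fin N → ℝ) := {l | (∀ j, 0 ≤ l j) ∧ ∑ j, l j = 1}

noncomputable def fcomb {S : Type*} {N : ℕ} (h : Fin N → S → ℝ) (l : Fin N → ℝ) (x : S) : ℝ :=
  ∑ j, l j * h j x

noncomputable def risk {S T : Type*} [MeasurableSpace S] [MeasurableSpace T]
    (P : Measure (S × T)) (ℓ : T → ℝ → ℝ) (f : S → ℝ) : ℝ :=
  ∫ p, ℓ p.2 (f p.1) ∂P

structure NiceLoss {T : Type*} (ℓ ℓd ℓdd : T → ℝ → ℝ) : Prop where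
  nonneg : ∀ y u, 0 ≤ ℓ y u
  convex : ∀ y, ConvexOn ℝ Set.univ (ℓ y)
  hderiv : ∀ y u, HasDerivAt (ℓ y) (ℓd y u) u
  hderiv2 : ∀ y u, HasDerivAt (ℓd y) (ℓdd y u) u
  bdd2 : ∃ B, ∀ y u, |ℓdd y u| ≤ B
  bdd0 : ∃ B, ∀ y, ℓ y 0 ≤ B
  bddd0 : ∃ B, ∀ y, |ℓd y 0| ≤ B

/-!
Let `G` be the penalized objective and `μ` a minimizer of it on the simplex. For `ε > 0`, `μ` has
full support: `x log x` has slope `-∞` at `0`, so moving from `μ` towards a vertex outside its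
support would decrease `G`, the risk changing only at a finite rate. Hence `t ↦ G(μ + t (ν - μ))`
is differentiable at `0` with nonnegative derivative, which (as `μ` and `ν` both sum to one) reads
`Q((ℓ' ∘ f_μ) (f_μ - f_ν)) + ε ∑ log μ_j (μ_j - ν_j) ≤ 0`. Adding this condition for `λ^ε` under
`P` to the one for `λ̂^ε` under `Pₙ` gives the inequality.
-/

open Filter Topology

section Loss

variable {T : Type*} {ℓ ℓd ℓdd : T → ℝ → ℝ}

lemma NiceLoss.abs_deriv_sub_le (hloss : NiceLoss ℓ ℓd ℓdd) {B : ℝ}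
    (hB : ∀ y u, |ℓdd y u| ≤ B) (y : T) (u v : ℝ) : |ℓd y u - ℓd y v| ≤ B * |u - v| := by
  simpa only [Real.norm_eq_abs] using
    convex_univ.norm_image_sub_le_of_norm_hasDerivWithin_le
      (fun x _ => (hloss.hderiv2 y x).hasDerivWithinAt) (fun x _ => hB y x)
      (Set.mem_univ v) (Set.mem_univ u)

lemma NiceLoss.exists_abs_deriv_le (hloss : NiceLoss ℓ ℓd ℓdd) (r : ℝ) :
    ∃ C, ∀ y u, |u| ≤ r → |ℓd y u| ≤ C := by
  obtain ⟨B₁, hB₁⟩ := hloss.bddd0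
  obtain ⟨B₂, hB₂⟩ := hloss.bdd2
  refine ⟨B₁ + B₂ * r, fun y u hu => ?_⟩
  have hB₂0 : 0 ≤ B₂ := (abs_nonneg _).trans (hB₂ y 0)
  have hlip := hloss.abs_deriv_sub_le hB₂ y u 0
  rw [sub_zero] at hlip
  nlinarith [abs_sub_abs_le_abs_sub (ℓd y u) (ℓd y 0), hB₁ y]

lemma NiceLoss.exists_abs_le (hloss : NiceLoss ℓ ℓd ℓdd) (r : ℝ) :
    ∃ C, ∀ y u, |u| ≤ r → |ℓ y u| ≤ C := by
  obtain ⟨B₀, hB₀⟩ := hloss.bdd0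
  obtain ⟨L, hL⟩ := hloss.exists_abs_deriv_le r
  refine ⟨B₀ + L * r, fun y u hu => ?_⟩
  have h0 : |(0 : ℝ)| ≤ r := by simpa using (abs_nonneg u).trans hu
  have hlip := (convex_Icc (-r) r).norm_image_sub_le_of_norm_hasDerivWithin_le
    (fun x _ => (hloss.hderiv y x).hasDerivWithinAt) (fun x hx => hL y x (abs_le.2 hx))
    (abs_le.1 h0) (abs_le.1 hu)
  simp only [Real.norm_eq_abs, sub_zero] at hlip
  have hL0 : 0 ≤ L := (abs_nonneg _).trans (hL y u hu)
  rw [abs_of_nonneg (hloss.nonneg y u)]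
  nlinarith [le_abs_self (ℓ y u - ℓ y 0), hB₀ y]

end Loss

lemma measurable_uncurry_of_hasDerivAt {T : Type*} [MeasurableSpace T] {g g' : T → ℝ → ℝ}
    (hg : Measurable fun p : T × ℝ => g p.1 p.2) (hd : ∀ y u, HasDerivAt (g y) (g' y u) u) :
    Measurable fun p : T × ℝ => g' p.1 p.2 := by
  set δ : ℕ → ℝ := fun n => ((n : ℝ) + 1)⁻¹
  have hδ : Tendsto δ atTop (𝓝[>] 0) :=
    tendsto_inv_atTop_nhdsGT_zero.comp
      (tendsto_atTop_add_const_right _ 1 tendsto_natCast_atTop_atTop)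
  refine measurable_of_tendsto_metrizable
    (f := fun (n : ℕ) (p : T × ℝ) => (δ n)⁻¹ * (g p.1 (p.2 + δ n) - g p.1 p.2)) (fun n => ?_)
    (tendsto_pi_nhds.2 fun p => (hd p.1 p.2).tendsto_slope_zero_right.comp hδ)
  exact ((hg.comp (measurable_fst.prodMk (measurable_snd.add_const _))).sub hg).const_mul _

section Dictionary

variable {S : Type*} {N : ℕ} {h : Fin N → S → ℝ}

lemma measurable_fcomb [MeasurableSpace S] (hhm : ∀ j, Measurable (h j)) (l : Fin N → ℝ) :
    Measurable (fcomb h l) :=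
  Finset.measurable_sum _ fun j _ => (hhm j).const_mul _

lemma abs_fcomb_le (hhb : ∀ j x, |h j x| ≤ 1) {l : Fin N → ℝ} (hl : l ∈ simplex N) (x : S) :
    |fcomb h l x| ≤ 1 :=
  calc |fcomb h l x| ≤ ∑ j, |l j * h j x| := Finset.abs_sum_le_sum_abs _ _
    _ ≤ ∑ j, l j := Finset.sum_le_sum fun j _ => by
      rw [abs_mul, abs_of_nonneg (hl.1 j)]
      exact mul_le_of_le_one_right (hl.1 j) (hhb j x)
    _ = 1 := hl.2

lemma abs_fcomb_sub_le (hhb : ∀ j x, |h j x| ≤ 1) {μ ν : Fin N → ℝ} (hμ : μ ∈ simplex N)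
    (hν : ν ∈ simplex N) (x : S) : |fcomb h ν x - fcomb h μ x| ≤ 2 :=
  (abs_sub _ _).trans (by linarith [abs_fcomb_le hhb hν x, abs_fcomb_le hhb hμ x])

lemma fcomb_add_smul_sub (h : Fin N → S → ℝ) (μ ν : Fin N → ℝ) (t : ℝ) (x : S) :
    fcomb h (μ + t • (ν - μ)) x = fcomb h μ x + t * (fcomb h ν x - fcomb h μ x) := by
  simp only [fcomb, Pi.add_apply, Pi.smul_apply, Pi.sub_apply, smul_eq_mul, add_mul, sub_mul,
    mul_assoc, Finset.sum_add_distrib, Finset.sum_sub_distrib, ← Finset.mul_sum]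

end Dictionary

section Risk

variable {S T : Type*} [MeasurableSpace S] [MeasurableSpace T] {ℓ ℓd ℓdd : T → ℝ → ℝ}

lemma NiceLoss.hasDerivAt_integral_add_mul (hloss : NiceLoss ℓ ℓd ℓdd)
    (hmeas : Measurable fun p : T × ℝ => ℓ p.1 p.2) (Q : Measure (S × T)) [IsFiniteMeasure Q]
    {f Δ : S → ℝ} (hf : Measurable f) (hΔ : Measurable Δ) {r s : ℝ}
    (hfr : ∀ x, |f x| ≤ r) (hΔs : ∀ x, |Δ x| ≤ s) :
    HasDerivAt (fun t => ∫ p, ℓ p.2 (f p.1 + t * Δ p.1) ∂Q)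
      (∫ p, ℓd p.2 (f p.1) * Δ p.1 ∂Q) 0 := by
  obtain ⟨C₀, hC₀⟩ := hloss.exists_abs_le r
  obtain ⟨C₁, hC₁⟩ := hloss.exists_abs_deriv_le (r + s)
  have hline (t : ℝ) : Measurable fun p : S × T => (p.2, f p.1 + t * Δ p.1) :=
    measurable_snd.prodMk ((hf.comp measurable_fst).add ((hΔ.comp measurable_fst).const_mul t))
  have hball (x : S) (t : ℝ) (ht : t ∈ Metric.ball (0 : ℝ) 1) : |f x + t * Δ x| ≤ r + s := by
    rw [mem_ball_zero_iff, Real.norm_eq_abs] at ht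
    calc |f x + t * Δ x| ≤ |f x| + |t| * |Δ x| := by rw [← abs_mul]; exact abs_add_le _ _
      _ ≤ r + 1 * s := add_le_add (hfr x) (mul_le_mul ht.le (hΔs x) (abs_nonneg _) zero_le_one)
      _ = r + s := by ring
  have hderiv := hasDerivAt_integral_of_dominated_loc_of_deriv_le (μ := Q) (x₀ := 0)
    (F := fun t p => ℓ p.2 (f p.1 + t * Δ p.1))
    (F' := fun t p => ℓd p.2 (f p.1 + t * Δ p.1) * Δ p.1) (bound := fun _ => C₁ * s)
    (Metric.ball_mem_nhds 0 one_pos)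
    (Eventually.of_forall fun t => (hmeas.comp (hline t)).aestronglyMeasurable)
    (Integrable.of_bound (hmeas.comp (hline 0)).aestronglyMeasurable C₀
      (ae_of_all _ fun p => by simpa using hC₀ _ _ (hfr p.1)))
    (((measurable_uncurry_of_hasDerivAt hmeas hloss.hderiv).comp (hline 0)).mul
      (hΔ.comp measurable_fst)).aestronglyMeasurable
    (ae_of_all _ fun p t ht => by
      have hℓd := hC₁ p.2 _ (hball p.1 t ht)
      rw [norm_mul, Real.norm_eq_abs, Real.norm_eq_abs]
      exact mul_le_mul hℓd (hΔs p.1) (abs_nonneg _) ((abs_nonneg _).trans hℓd))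
    (integrable_const _)
    (ae_of_all _ fun p t _ =>
      (hloss.hderiv p.2 _).comp t ((hasDerivAt_mul_const (Δ p.1)).const_add (f p.1)))
  simpa using hderiv.2

end Risk

lemma hasDerivAt_sum_mul_log_line {ι : Type*} [Fintype ι] {μ : ι → ℝ} (hμ : ∀ j, μ j ≠ 0)
    (ν : ι → ℝ) :
    HasDerivAt (fun t : ℝ => ∑ j, (μ + t • (ν - μ)) j * log ((μ + t • (ν - μ)) j))
      (∑ j, (log (μ j) + 1) * (ν j - μ j)) 0 := by
  refine HasDerivAt.fun_sum fun j _ => ?_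
  exact (hasDerivAt_mul_log (hμ j)).comp_of_eq 0
    ((hasDerivAt_mul_const (ν j - μ j)).const_add (μ j)) (by simp)

lemma sum_mul_log_line_single_le {ι : Type*} [Fintype ι] [DecidableEq ι] {μ : ι → ℝ}
    (hμ : ∀ j, 0 ≤ μ j) {k : ι} (hk : μ k = 0) {t : ℝ} (ht₀ : 0 ≤ t) (ht₁ : t ≤ 1) :
    ∑ j, (μ + t • ((Pi.single k 1 : ι → ℝ) - μ)) j
        * log ((μ + t • ((Pi.single k 1 : ι → ℝ) - μ)) j)
      ≤ (1 - t) * ∑ j, μ j * log (μ j) + t * log t := by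
  have hterm (j : ι) :
      (μ + t • ((Pi.single k 1 : ι → ℝ) - μ)) j
          * log ((μ + t • ((Pi.single k 1 : ι → ℝ) - μ)) j)
        ≤ (1 - t) * (μ j * log (μ j)) + (Pi.single k (t * log t) : ι → ℝ) j := by
    rcases eq_or_ne j k with rfl | hj
    · simp [hk]
    · have := Real.convexOn_mul_log.2 (Set.mem_Ici.2 (hμ j)) Set.self_mem_Ici
        (sub_nonneg.2 ht₁) ht₀ (sub_add_cancel 1 t)
      simp only [smul_eq_mul, mul_zero, add_zero, zero_mul] at this
      simpa [hj, sub_mul, mul_sub, ← sub_eq_add_neg] using this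
  calc _ ≤ ∑ j, ((1 - t) * (μ j * log (μ j)) + (Pi.single k (t * log t) : ι → ℝ) j) :=
        Finset.sum_le_sum fun j _ => hterm j
    _ = _ := by simp [Finset.sum_add_distrib, Finset.mul_sum]

lemma sum_log_div_mul_sub {ι : Type*} [Fintype ι] {a b : ι → ℝ} (ha : ∀ j, a j ≠ 0)
    (hb : ∀ j, b j ≠ 0) :
    ∑ j, log (a j / b j) * (a j - b j)
      = ∑ j, log (a j) * (a j - b j) + ∑ j, log (b j) * (b j - a j) := by
  rw [← Finset.sum_add_distrib]
  refine Finset.sum_congr rfl fun j _ => ?_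
  rw [Real.log_div (ha j) (hb j)]
  ring

noncomputable def penalizedRisk {S T : Type*} [MeasurableSpace S] [MeasurableSpace T]
    (Q : Measure (S × T)) (ℓ : T → ℝ → ℝ) {N : ℕ} (h : Fin N → S → ℝ) (ε : ℝ)
    (l : Fin N → ℝ) : ℝ :=
  risk Q ℓ (fcomb h l) + ε * ∑ j, l j * log (l j)

section Minimizers

variable {S T : Type*} [MeasurableSpace S] [MeasurableSpace T] {ℓ ℓd ℓdd : T → ℝ → ℝ}
  {N : ℕ} {h : Fin N → S → ℝ} {μ ν : Fin N → ℝ}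

lemma NiceLoss.hasDerivAt_risk_line (hloss : NiceLoss ℓ ℓd ℓdd)
    (hmeas : Measurable fun p : T × ℝ => ℓ p.1 p.2) (Q : Measure (S × T)) [IsFiniteMeasure Q]
    (hhm : ∀ j, Measurable (h j)) (hhb : ∀ j x, |h j x| ≤ 1)
    (hμ : μ ∈ simplex N) (hν : ν ∈ simplex N) :
    HasDerivAt (fun t : ℝ => risk Q ℓ (fcomb h (μ + t • (ν - μ))))
      (∫ p, ℓd p.2 (fcomb h μ p.1) * (fcomb h ν p.1 - fcomb h μ p.1) ∂Q) 0 := by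
  simp only [risk, fcomb_add_smul_sub]
  exact hloss.hasDerivAt_integral_add_mul hmeas Q (measurable_fcomb hhm μ)
    ((measurable_fcomb hhm ν).sub (measurable_fcomb hhm μ)) (abs_fcomb_le hhb hμ)
    (abs_fcomb_sub_le hhb hμ hν)

lemma NiceLoss.pos_of_isMinOn_penalizedRisk (hloss : NiceLoss ℓ ℓd ℓdd)
    (hmeas : Measurable fun p : T × ℝ => ℓ p.1 p.2) (Q : Measure (S × T)) [IsFiniteMeasure Q]
    (hhm : ∀ j, Measurable (h j)) (hhb : ∀ j x, |h j x| ≤ 1)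
    {ε : ℝ} (hε : 0 < ε) (hμ : μ ∈ simplex N)
    (hmin : IsMinOn (penalizedRisk Q ℓ h ε) (simplex N) μ) (k : Fin N) : 0 < μ k := by
  refine (hμ.1 k).lt_of_ne' fun hk => ?_
  have he : (Pi.single k 1 : Fin N → ℝ) ∈ simplex N := single_mem_stdSimplex ℝ k
  set R : ℝ → ℝ := fun t => risk Q ℓ (fcomb h (μ + t • ((Pi.single k 1 : Fin N → ℝ) - μ)))
  set H : ℝ := ∑ j, μ j * log (μ j)
  have hslope : ∀ t ∈ Set.Ioc (0 : ℝ) 1, 0 ≤ t⁻¹ • (R (0 + t) - R 0) + ε * (log t - H) := by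
    intro t ht
    have hmin_t := isMinOn_iff.1 hmin _
      ((convex_stdSimplex ℝ _).add_smul_sub_mem hμ he ⟨ht.1.le, ht.2⟩)
    have hent := sum_mul_log_line_single_le hμ.1 hk ht.1.le ht.2
    have hR0 : R 0 = risk Q ℓ (fcomb h μ) := by simp [R]
    unfold penalizedRisk at hmin_t
    have hscaled : 0 ≤ R t - R 0 + ε * (t * (log t - H)) := by
      rw [hR0]
      nlinarith [mul_le_mul_of_nonneg_left hent hε.le]
    rw [zero_add, smul_eq_mul, ← inv_mul_cancel_left₀ ht.1.ne' (log t - H),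
      ← mul_left_comm, ← mul_add]
    exact mul_nonneg (inv_nonneg.2 ht.1.le) hscaled
  have hlim : Tendsto (fun t => t⁻¹ • (R (0 + t) - R 0) + ε * (log t - H)) (𝓝[>] 0) atBot :=
    (hloss.hasDerivAt_risk_line hmeas Q hhm hhb hμ he).tendsto_slope_zero_right.add_atBot
      ((tendsto_const_mul_atBot_of_pos hε).2
        (tendsto_atBot_add_const_right _ (-H) Real.tendsto_log_nhdsGT_zero))
  obtain ⟨t, ht, hneg⟩ :=
    (Eventually.and (Ioc_mem_nhdsGT one_pos) (hlim.eventually_lt_atBot 0)).exists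
  exact (hslope t ht).not_gt hneg

lemma NiceLoss.integrable_deriv_fcomb_mul (hloss : NiceLoss ℓ ℓd ℓdd)
    (hmeas : Measurable fun p : T × ℝ => ℓ p.1 p.2) (Q : Measure (S × T)) [IsFiniteMeasure Q]
    (hhm : ∀ j, Measurable (h j)) (hhb : ∀ j x, |h j x| ≤ 1)
    {l : Fin N → ℝ} (hl : l ∈ simplex N)
    (hμ : μ ∈ simplex N) (hν : ν ∈ simplex N) :
    Integrable (fun p : S × T => ℓd p.2 (fcomb h l p.1) * (fcomb h ν p.1 - fcomb h μ p.1)) Q := by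
  obtain ⟨C, hC⟩ := hloss.exists_abs_deriv_le 1
  have hm : Measurable fun p : S × T => ℓd p.2 (fcomb h l p.1) * (fcomb h ν p.1 - fcomb h μ p.1) :=
    ((measurable_uncurry_of_hasDerivAt hmeas hloss.hderiv).comp
      (measurable_snd.prodMk ((measurable_fcomb hhm l).comp measurable_fst))).mul
      (((measurable_fcomb hhm ν).sub (measurable_fcomb hhm μ)).comp measurable_fst)
  refine Integrable.of_bound hm.aestronglyMeasurable (C * 2) (ae_of_all _ fun p => ?_)
  have hℓd := hC p.2 _ (abs_fcomb_le hhb hl p.1)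
  rw [norm_mul, Real.norm_eq_abs, Real.norm_eq_abs]
  exact mul_le_mul hℓd (abs_fcomb_sub_le hhb hμ hν p.1) (abs_nonneg _) ((abs_nonneg _).trans hℓd)

theorem NiceLoss.variational_inequality_of_isMinOn (hloss : NiceLoss ℓ ℓd ℓdd)
    (hmeas : Measurable fun p : T × ℝ => ℓ p.1 p.2) (Q : Measure (S × T)) [IsFiniteMeasure Q]
    (hhm : ∀ j, Measurable (h j)) (hhb : ∀ j x, |h j x| ≤ 1) {ε : ℝ} (hε : 0 ≤ ε)
    (hμ : μ ∈ simplex N) (hν : ν ∈ simplex N)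
    (hmin : IsMinOn (penalizedRisk Q ℓ h ε) (simplex N) μ) :
    (∫ p, ℓd p.2 (fcomb h μ p.1) * (fcomb h μ p.1 - fcomb h ν p.1) ∂Q)
      + ε * ∑ j, log (μ j) * (μ j - ν j) ≤ 0 := by
  have hent : HasDerivAt
      (fun t : ℝ => ε * ∑ j, (μ + t • (ν - μ)) j * log ((μ + t • (ν - μ)) j))
      (ε * ∑ j, (log (μ j) + 1) * (ν j - μ j)) 0 := by
    rcases hε.eq_or_lt with rfl | hε
    · simpa using hasDerivAt_const (0 : ℝ) (0 : ℝ)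
    · exact (hasDerivAt_sum_mul_log_line (fun j =>
        (hloss.pos_of_isMinOn_penalizedRisk hmeas Q hhm hhb hε hμ hmin j).ne') ν).const_mul ε
  have hderiv := (hloss.hasDerivAt_risk_line hmeas Q hhm hhb hμ hν).add hent
  have hsegment :
      IsMinOn (fun t : ℝ => penalizedRisk Q ℓ h ε (μ + t • (ν - μ))) (Set.Icc 0 1) 0 :=
    isMinOn_iff.2 fun t ht => by
      simpa using isMinOn_iff.1 hmin _ ((convex_stdSimplex ℝ _).add_smul_sub_mem hμ hν ht)
  have hnonneg := hsegment.localize.hasFDerivWithinAt_nonneg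
    hderiv.hasFDerivAt.hasFDerivWithinAt (y := 1)
    (mem_posTangentConeAt_of_segment_subset (by rw [zero_add, segment_eq_Icc zero_le_one]))
  have hrisk : (∫ p, ℓd p.2 (fcomb h μ p.1) * (fcomb h μ p.1 - fcomb h ν p.1) ∂Q)
      = -∫ p, ℓd p.2 (fcomb h μ p.1) * (fcomb h ν p.1 - fcomb h μ p.1) ∂Q := by
    rw [← integral_neg]
    congr 1 with p
    ring
  have hentropy : ∑ j, (log (μ j) + 1) * (ν j - μ j) = -∑ j, log (μ j) * (μ j - ν j) := by
    simp only [add_mul, one_mul, Finset.sum_add_distrib, Finset.sum_sub_distrib, hν.2, hμ.2,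
      sub_self, add_zero, ← Finset.sum_neg_distrib, ← mul_neg, neg_sub]
  simp only [ContinuousLinearMap.toSpanSingleton_apply_one, hentropy] at hnonneg
  linarith

end Minimizers

/-- Subtracting the necessary conditions of the two entropy-penalized minimization
problems (3.1) and (3.2) yields the basic inequality (3.4). -/
theorem statement13 {S T : Type*} [MeasurableSpace S] [MeasurableSpace T]
    (ℓ ℓd ℓdd : T → ℝ → ℝ) (hloss : NiceLoss ℓ ℓd ℓdd)
    (hmeas : Measurable fun p : T × ℝ => ℓ p.1 p.2)
    (P Pn : Measure (S × T)) [IsProbabilityMeasure P] [IsProbabilityMeasure Pn]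
    {N : ℕ} (h : Fin N → S → ℝ) (hhm : ∀ j, Measurable (h j)) (hhb : ∀ j x, |h j x| ≤ 1)
    (ε : ℝ) (hε : 0 ≤ ε)
    (lamEps : Fin N → ℝ) (hEps : lamEps ∈ simplex N)
    (hEpsMin : IsMinOn
      (fun l : Fin N → ℝ => risk P ℓ (fcomb h l) + ε * ∑ j, l j * Real.log (l j))
      (simplex N) lamEps)
    (lamHat : Fin N → ℝ) (hHat : lamHat ∈ simplex N)
    (hHatMin : IsMinOn
      (fun l : Fin N → ℝ => risk Pn ℓ (fcomb h l) + ε * ∑ j, l j * Real.log (l j))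
      (simplex N) lamHat) :
    (∫ p, (ℓd p.2 (fcomb h lamHat p.1) - ℓd p.2 (fcomb h lamEps p.1))
        * (fcomb h lamHat p.1 - fcomb h lamEps p.1) ∂P)
      + ε * ∑ j, Real.log (lamHat j / lamEps j) * (lamHat j - lamEps j) ≤
    (∫ p, ℓd p.2 (fcomb h lamHat p.1) * (fcomb h lamHat p.1 - fcomb h lamEps p.1) ∂P)
      - ∫ p, ℓd p.2 (fcomb h lamHat p.1) * (fcomb h lamHat p.1 - fcomb h lamEps p.1) ∂Pn := by
  have hfoc := hloss.variational_inequality_of_isMinOn hmeas P hhm hhb hε hEps hHat hEpsMin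
  have hfocₙ := hloss.variational_inequality_of_isMinOn hmeas Pn hhm hhb hε hHat hEps hHatMin
  have hK : ε * ∑ j, Real.log (lamHat j / lamEps j) * (lamHat j - lamEps j)
      = ε * ∑ j, Real.log (lamHat j) * (lamHat j - lamEps j)
        + ε * ∑ j, Real.log (lamEps j) * (lamEps j - lamHat j) := by
    rcases hε.eq_or_lt with rfl | hε
    · simp
    rw [sum_log_div_mul_sub
      (fun j => (hloss.pos_of_isMinOn_penalizedRisk hmeas Pn hhm hhb hε hHat hHatMin j).ne')
      (fun j => (hloss.pos_of_isMinOn_penalizedRisk hmeas P hhm hhb hε hEps hEpsMin j).ne'),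
      mul_add]
  have hsplit : (∫ p, (ℓd p.2 (fcomb h lamHat p.1) - ℓd p.2 (fcomb h lamEps p.1))
        * (fcomb h lamHat p.1 - fcomb h lamEps p.1) ∂P)
      = (∫ p, ℓd p.2 (fcomb h lamHat p.1) * (fcomb h lamHat p.1 - fcomb h lamEps p.1) ∂P)
        + ∫ p, ℓd p.2 (fcomb h lamEps p.1) * (fcomb h lamEps p.1 - fcomb h lamHat p.1) ∂P := by
    rw [← integral_add (hloss.integrable_deriv_fcomb_mul hmeas P hhm hhb hHat hEps hHat)
      (hloss.integrable_deriv_fcomb_mul hmeas P hhm hhb hEps hHat hEps)]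
    congr 1 with p
    ring
  rw [hsplit, hK]
  linarith

end EntropySparse
end

section
/- Since f_* minimizes the risk P(ℓ∘f) over all measurable functions, the function ℓ'∘f_* is orthogonal in L₂(P) to the linear span 𝓛 of the dictionary, i.e. P((ℓ'∘f_*)·h_j) = 0 for all j = 1,…,N. Moreover, for any function f̄ uniformly bounded by M with ℓ'∘f̄ ∈ 𝓛⊥ (in particular f̄ = f_*), the function g_ε := P_𝓛(ℓ'∘f_{λ^ε}) satisfies ‖g_ε‖_{L₂(P)} ≤ C·‖f_{λ^ε} − f̄‖_{L₂(Π)}, where C is the (uniform) Lipschitz constant of u ↦ ℓ'_u(y,u). -/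
open MeasureTheory Real Finset
open scoped BigOperators ENNReal

namespace EntropySparse

noncomputable def l2sq {S : Type*} [MeasurableSpace S] (μ : Measure S) (f : S → ℝ) : ℝ :=
  ∫ x, (f x) ^ 2 ∂μ

noncomputable def l2norm {S : Type*} [MeasurableSpace S] (μ : Measure S) (f : S → ℝ) : ℝ :=
  Real.sqrt (l2sq μ f)

noncomputable def projFin {E : Type*} [NormedAddCommGroup E] [InnerProductSpace ℝ E]
    (K : Submodule ℝ E) (hK : FiniteDimensional ℝ K) (g : E) : E :=
  haveI := hK
  (K.orthogonalProjectionOnto g : E)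

/-!
Orthogonality is the first-order condition for `f_*`: the risk along the line `f_* + t h_j`
is minimal at `t = 0`, and it may be differentiated under the integral because `ℓ'`, being
Lipschitz and bounded at `0`, is bounded on bounded sets uniformly in `y`.
For the bound, `ℓ' ∘ f̄ ∈ 𝓛⊥` gives `P_𝓛 (ℓ' ∘ f_λ) = P_𝓛 (ℓ' ∘ f_λ - ℓ' ∘ f̄)`; the projection
is a contraction and `|ℓ'(y, u) - ℓ'(y, v)| ≤ C |u - v|` pointwise.
-/

open Filter

theorem measurable_uncurry_of_hasDerivAt_s15 {α : Type*} [MeasurableSpace α] {f f' : α → ℝ → ℝ}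
    (hf : Measurable (Function.uncurry f)) (hd : ∀ a x, HasDerivAt (f a) (f' a x) x) :
    Measurable (Function.uncurry f') := by
  have hslope : ∀ n : ℕ, Measurable fun p : α × ℝ =>
      ((n : ℝ)⁻¹)⁻¹ • (f p.1 (p.2 + (n : ℝ)⁻¹) - f p.1 p.2) := by
    intro n
    have hshift : Measurable fun p : α × ℝ => f p.1 (p.2 + (n : ℝ)⁻¹) :=
      hf.comp (measurable_fst.prodMk (measurable_snd.add_const _))
    exact (hshift.sub hf).const_smul ((n : ℝ)⁻¹)⁻¹
  refine measurable_of_tendsto_metrizable hslope (tendsto_pi_nhds.mpr fun p => ?_)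
  exact (hd p.1 p.2).tendsto_slope_zero_right.comp
    (tendsto_inv_atTop_nhdsGT_zero.comp tendsto_natCast_atTop_atTop)

section Differentiation

variable {α : Type*} [MeasurableSpace α] {μ : Measure α} [IsFiniteMeasure μ]
  {L L' : α → ℝ → ℝ} {a b : α → ℝ} {K : ℝ}

theorem hasDerivAt_integral_comp_add_mul
    (hL : ∀ p u, HasDerivAt (L p) (L' p u) u)
    (hLm : ∀ t, AEStronglyMeasurable (fun p => L p (a p + t * b p)) μ)
    (hLi : Integrable (fun p => L p (a p)) μ)
    (hL'm : AEStronglyMeasurable (fun p => L' p (a p) * b p) μ)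
    (hL'K : ∀ p u, |u - a p| ≤ 1 → |L' p u| ≤ K) (hb : ∀ p, |b p| ≤ 1) :
    HasDerivAt (fun t => ∫ p, L p (a p + t * b p) ∂μ) (∫ p, L' p (a p) * b p ∂μ) 0 := by
  have hL'bound : ∀ p, ∀ t ∈ Metric.ball (0 : ℝ) 1, ‖L' p (a p + t * b p) * b p‖ ≤ K := by
    intro p t ht
    rw [mem_ball_zero_iff, Real.norm_eq_abs] at ht
    have hK := hL'K p (a p + t * b p) (by
      rw [add_sub_cancel_left, abs_mul]
      nlinarith [abs_nonneg t, abs_nonneg (b p), hb p])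
    rw [Real.norm_eq_abs, abs_mul]
    exact (mul_le_of_le_one_right (abs_nonneg _) (hb p)).trans hK
  have hderiv : ∀ p, ∀ t ∈ Metric.ball (0 : ℝ) 1,
      HasDerivAt (fun t => L p (a p + t * b p)) (L' p (a p + t * b p) * b p) t := by
    intro p t _
    exact (hL p _).comp t ((hasDerivAt_mul_const (b p)).const_add (a p))
  have hdom := hasDerivAt_integral_of_dominated_loc_of_deriv_le (Metric.ball_mem_nhds 0 one_pos)
    (Eventually.of_forall hLm) (by simpa using hLi) (by simpa using hL'm)
    (Eventually.of_forall hL'bound) (integrable_const K) (Eventually.of_forall hderiv)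
  simpa using hdom.2

theorem integral_deriv_mul_eq_zero_of_forall_le
    (hL : ∀ p u, HasDerivAt (L p) (L' p u) u)
    (hLm : ∀ t, AEStronglyMeasurable (fun p => L p (a p + t * b p)) μ)
    (hLi : Integrable (fun p => L p (a p)) μ)
    (hL'm : AEStronglyMeasurable (fun p => L' p (a p) * b p) μ)
    (hL'K : ∀ p u, |u - a p| ≤ 1 → |L' p u| ≤ K) (hb : ∀ p, |b p| ≤ 1)
    (hmin : ∀ t, ∫ p, L p (a p) ∂μ ≤ ∫ p, L p (a p + t * b p) ∂μ) :
    ∫ p, L' p (a p) * b p ∂μ = 0 := by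
  refine IsLocalMin.hasDerivAt_eq_zero (Eventually.of_forall fun t => ?_)
    (hasDerivAt_integral_comp_add_mul hL hLm hLi hL'm hL'K hb)
  simpa using hmin t

end Differentiation

section Loss

variable {T : Type*} {ℓ ℓd : T → ℝ → ℝ}

theorem abs_le_add_mul_abs_of_lipschitz {B C : ℝ}
    (hLip : ∀ y u v, |ℓd y u - ℓd y v| ≤ C * |u - v|) (hB : ∀ y, |ℓd y 0| ≤ B) (y : T) (u : ℝ) :
    |ℓd y u| ≤ B + |C| * |u| := by
  have hdiff : |ℓd y u - ℓd y 0| ≤ |C| * |u| := by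
    simpa using (hLip y u 0).trans (mul_le_mul_of_nonneg_right (le_abs_self C) (abs_nonneg _))
  linarith [abs_sub_abs_le_abs_sub (ℓd y u) (ℓd y 0), hB y]

theorem abs_le_of_abs_deriv_le (hnn : ∀ y u, 0 ≤ ℓ y u)
    (hd : ∀ y u, HasDerivAt (ℓ y) (ℓd y u) u) {B₀ R K : ℝ} (hB₀ : ∀ y, ℓ y 0 ≤ B₀)
    (hK : ∀ y u, |u| ≤ R → |ℓd y u| ≤ K) (y : T) {u : ℝ} (hu : |u| ≤ R) :
    |ℓ y u| ≤ B₀ + K * R := by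
  have hR : 0 ≤ R := (abs_nonneg u).trans hu
  have hmvt : ‖ℓ y u - ℓ y 0‖ ≤ K * ‖u - 0‖ :=
    (convex_Icc (-R) R).norm_image_sub_le_of_norm_hasDerivWithin_le
      (fun v _ => (hd y v).hasDerivWithinAt) (fun v hv => hK y v (abs_le.mpr hv))
      ⟨by linarith, hR⟩ (abs_le.mp hu)
  rw [Real.norm_eq_abs, Real.norm_eq_abs, sub_zero] at hmvt
  have hK₀ : 0 ≤ K := (abs_nonneg _).trans (hK y u hu)
  rw [abs_of_nonneg (hnn y u)]
  nlinarith [le_abs_self (ℓ y u - ℓ y 0), hB₀ y]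

end Loss

theorem integral_deriv_mul_eq_zero_of_risk_le {S T : Type*} [MeasurableSpace S]
    [MeasurableSpace T] {ℓ ℓd : T → ℝ → ℝ} (hnn : ∀ y u, 0 ≤ ℓ y u)
    (hd : ∀ y u, HasDerivAt (ℓ y) (ℓd y u) u) (hmeas : Measurable (Function.uncurry ℓ))
    {B₀ B C : ℝ} (hB₀ : ∀ y, ℓ y 0 ≤ B₀) (hB : ∀ y, |ℓd y 0| ≤ B)
    (hLip : ∀ y u v, |ℓd y u - ℓd y v| ≤ C * |u - v|)
    {P : Measure (S × T)} [IsFiniteMeasure P] {M : ℝ} {f : S → ℝ} (hfm : Measurable f)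
    (hfb : ∀ x, |f x| ≤ M) (hfmin : ∀ g : S → ℝ, Measurable g → risk P ℓ f ≤ risk P ℓ g)
    {g : S → ℝ} (hgm : Measurable g) (hgb : ∀ x, |g x| ≤ 1) :
    ∫ p, ℓd p.2 (f p.1) * g p.1 ∂P = 0 := by
  have hKR : ∀ R y u, |u| ≤ R → |ℓd y u| ≤ B + |C| * R := fun R y u hu =>
    (abs_le_add_mul_abs_of_lipschitz hLip hB y u).trans (by gcongr)
  have hf₁ : Measurable fun p : S × T => f p.1 := hfm.comp measurable_fst
  have hg₁ : Measurable fun p : S × T => g p.1 := hgm.comp measurable_fst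
  have hline_meas : ∀ t : ℝ,
      AEStronglyMeasurable (fun p : S × T => ℓ p.2 (f p.1 + t * g p.1)) P := fun t =>
    (hmeas.comp (measurable_snd.prodMk (hf₁.add (hg₁.const_mul t)))).aestronglyMeasurable
  have hrisk_int : Integrable (fun p : S × T => ℓ p.2 (f p.1)) P :=
    Integrable.of_bound (hmeas.comp (measurable_snd.prodMk hf₁)).aestronglyMeasurable _
      (Eventually.of_forall fun p => abs_le_of_abs_deriv_le hnn hd hB₀ (hKR M) p.2 (hfb p.1))
  have hderiv_meas : AEStronglyMeasurable (fun p : S × T => ℓd p.2 (f p.1) * g p.1) P :=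
    (((measurable_uncurry_of_hasDerivAt_s15 hmeas hd).comp
      (measurable_snd.prodMk hf₁)).mul hg₁).aestronglyMeasurable
  have hderiv_bdd : ∀ (p : S × T) u, |u - f p.1| ≤ 1 → |ℓd p.2 u| ≤ B + |C| * (M + 1) :=
    fun p u hu => hKR (M + 1) p.2 u (by linarith [abs_sub_abs_le_abs_sub u (f p.1), hfb p.1])
  exact integral_deriv_mul_eq_zero_of_forall_le (L := fun p : S × T => ℓ p.2)
    (L' := fun p => ℓd p.2) (fun p => hd p.2) hline_meas hrisk_int hderiv_meas hderiv_bdd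
    (fun p => hgb p.1)
    (fun t => hfmin (fun x => f x + t * g x) (hfm.add (hgm.const_mul t)))

theorem norm_orthogonalProjectionOnto_le_norm_sub {𝕜 E : Type*} [RCLike 𝕜]
    [NormedAddCommGroup E] [InnerProductSpace 𝕜 E] (K : Submodule 𝕜 E)
    [K.HasOrthogonalProjection] (u : E) {v : E} (hv : v ∈ Kᗮ) :
    ‖(K.orthogonalProjectionOnto u : E)‖ ≤ ‖u - v‖ := by
  have hproj : K.orthogonalProjectionOnto u = K.orthogonalProjectionOnto (u - v) := by
    rw [map_sub, K.orthogonalProjectionOnto_apply_of_mem_orthogonal hv, sub_zero]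
  rw [hproj]
  exact K.norm_orthogonalProjectionOnto_apply_le _

section L2

variable {α : Type*} [MeasurableSpace α] {μ : Measure α}

theorem norm_toLp_eq_l2norm {f : α → ℝ} (hf : MemLp f 2 μ) : ‖hf.toLp f‖ = l2norm μ f := by
  rw [l2norm, l2sq, ← Real.sqrt_sq (norm_nonneg _), ← real_inner_self_eq_norm_sq, L2.inner_def]
  congr 1
  refine integral_congr_ae ?_
  filter_upwards [hf.coeFn_toLp] with x hx
  simp [hx, sq]

theorem l2norm_map {β : Type*} [MeasurableSpace β] {φ : α → β} (hφ : AEMeasurable φ μ)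
    {f : β → ℝ} (hf : AEStronglyMeasurable f (μ.map φ)) :
    l2norm (μ.map φ) f = l2norm μ (fun a => f (φ a)) := by
  rw [l2norm, l2sq, integral_map (f := fun x => f x ^ 2) hφ (hf.pow 2)]
  rfl

theorem memLp_fcomb_comp {S : Type*} {N : ℕ} {h : Fin N → S → ℝ} {φ : α → S} {q : ℝ≥0∞}
    (hh : ∀ j, MemLp (fun a => h j (φ a)) q μ) (l : Fin N → ℝ) :
    MemLp (fun a => fcomb h l (φ a)) q μ := by
  simp only [fcomb]
  exact memLp_finsetSum _ fun j _ => (hh j).const_mul (l j)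

theorem norm_projFin_toLp_deriv_le {T : Type*} {ℓd : T → ℝ → ℝ} {C : ℝ}
    (hLip : ∀ y u v, |ℓd y u - ℓd y v| ≤ C * |u - v|) (y : α → T)
    (K : Submodule ℝ (Lp ℝ 2 μ)) (hK : FiniteDimensional ℝ K) {f g : α → ℝ}
    (hf : MemLp (fun a => ℓd (y a) (f a)) 2 μ) (hg : MemLp (fun a => ℓd (y a) (g a)) 2 μ)
    (horth : hg.toLp _ ∈ Kᗮ) (hfg : MemLp (fun a => f a - g a) 2 μ) :
    ‖projFin K hK (hf.toLp _)‖ ≤ C * l2norm μ (fun a => f a - g a) := by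
  rw [← norm_toLp_eq_l2norm hfg, projFin]
  refine (norm_orthogonalProjectionOnto_le_norm_sub K _ horth).trans
    (Lp.norm_le_mul_norm_of_ae_le_mul ?_)
  filter_upwards [Lp.coeFn_sub (hf.toLp _) (hg.toLp _), hf.coeFn_toLp, hg.coeFn_toLp,
    hfg.coeFn_toLp] with a hsub hfa hga hfga
  rw [hsub, Pi.sub_apply, hfa, hga, hfga, Real.norm_eq_abs, Real.norm_eq_abs]
  exact hLip (y a) (f a) (g a)

end L2

theorem statement15_general {S T : Type*} [MeasurableSpace S] [MeasurableSpace T]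
    (ℓ ℓd ℓdd : T → ℝ → ℝ) (hloss : NiceLoss ℓ ℓd ℓdd)
    (hmeas : Measurable fun p : T × ℝ => ℓ p.1 p.2)
    (C : ℝ) (hLip : ∀ y u v, |ℓd y u - ℓd y v| ≤ C * |u - v|)
    (P : Measure (S × T)) [IsProbabilityMeasure P]
    {N : ℕ} (h : Fin N → S → ℝ) (hhm : ∀ j, Measurable (h j)) (hhb : ∀ j x, |h j x| ≤ 1)
    (hmemh : ∀ j, MemLp (fun p : S × T => h j p.1) 2 P)
    (M : ℝ) (fstar : S → ℝ) (hfm : Measurable fstar) (hfb : ∀ x, |fstar x| ≤ M)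
    (hfmin : ∀ g : S → ℝ, Measurable g → risk P ℓ fstar ≤ risk P ℓ g)
    (lamEps : Fin N → ℝ)
    (hmemEps : MemLp (fun p : S × T => ℓd p.2 (fcomb h lamEps p.1)) 2 P) :
    (∀ j, ∫ p, ℓd p.2 (fstar p.1) * h j p.1 ∂P = 0) ∧
    (∀ fbar : S → ℝ, Measurable fbar → (∀ x, |fbar x| ≤ M) →
      ∀ hmembar : MemLp (fun p : S × T => ℓd p.2 (fbar p.1)) 2 P,
        hmembar.toLp (fun p : S × T => ℓd p.2 (fbar p.1)) ∈
          (Submodule.span ℝ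
            (Set.range fun j => (hmemh j).toLp (fun p : S × T => h j p.1)))ᗮ →
        ‖projFin
            (Submodule.span ℝ
              (Set.range fun j => (hmemh j).toLp (fun p : S × T => h j p.1)))
            (FiniteDimensional.span_of_finite ℝ (Set.finite_range _))
            (hmemEps.toLp (fun p : S × T => ℓd p.2 (fcomb h lamEps p.1)))‖ ≤
          C * l2norm (P.map Prod.fst) (fun x => fcomb h lamEps x - fbar x)) := by
  obtain ⟨B₀, hB₀⟩ := hloss.bdd0
  obtain ⟨B, hB⟩ := hloss.bddd0
  refine ⟨fun j => integral_deriv_mul_eq_zero_of_risk_le hloss.nonneg hloss.hderiv hmeas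
    hB₀ hB hLip hfm hfb hfmin (hhm j) (hhb j), ?_⟩
  intro fbar hfbar_meas hfbar_bdd hmembar horth
  have hfcomb_meas : Measurable (fcomb h lamEps) :=
    Finset.measurable_sum _ fun j _ => (hhm j).const_mul _
  have hfbar : MemLp (fun p : S × T => fbar p.1) 2 P :=
    MemLp.of_bound (hfbar_meas.comp measurable_fst).aestronglyMeasurable M
      (Eventually.of_forall fun p => hfbar_bdd p.1)
  rw [l2norm_map (f := fun x => fcomb h lamEps x - fbar x) measurable_fst.aemeasurable
    (hfcomb_meas.sub hfbar_meas).aestronglyMeasurable]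
  exact norm_projFin_toLp_deriv_le hLip Prod.snd _ _ hmemEps hmembar horth
    ((memLp_fcomb_comp hmemh lamEps).sub hfbar)

/-- `ℓ' ∙ f_*` is orthogonal in `L₂(P)` to the linear span `𝓛` of the dictionary, and for
any `f̄` bounded by `M` with `ℓ' ∙ f̄ ∈ 𝓛⊥`, the projection `g_ε = P_𝓛(ℓ' ∙ f_{λ^ε})`
satisfies `‖g_ε‖_{L₂(P)} ≤ C ‖f_{λ^ε} − f̄‖_{L₂(Π)}` with `C` the Lipschitz constant of `ℓ'`. -/
theorem statement15 {S T : Type*} [MeasurableSpace S] [MeasurableSpace T]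
    (ℓ ℓd ℓdd : T → ℝ → ℝ) (hloss : NiceLoss ℓ ℓd ℓdd)
    (hmeas : Measurable fun p : T × ℝ => ℓ p.1 p.2)
    (C : ℝ) (hLip : ∀ y u v, |ℓd y u - ℓd y v| ≤ C * |u - v|)
    (P : Measure (S × T)) [IsProbabilityMeasure P]
    {N : ℕ} (h : Fin N → S → ℝ) (hhm : ∀ j, Measurable (h j)) (hhb : ∀ j x, |h j x| ≤ 1)
    (hmemh : ∀ j, MemLp (fun p : S × T => h j p.1) 2 P)
    (M : ℝ) (fstar : S → ℝ) (hfm : Measurable fstar) (hfb : ∀ x, |fstar x| ≤ M)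
    (hfmin : ∀ g : S → ℝ, Measurable g → risk P ℓ fstar ≤ risk P ℓ g)
    (ε : ℝ) (hε : 0 ≤ ε)
    (lamEps : Fin N → ℝ) (hEps : lamEps ∈ simplex N)
    (hEpsMin : IsMinOn
      (fun l : Fin N → ℝ => risk P ℓ (fcomb h l) + ε * ∑ j, l j * Real.log (l j))
      (simplex N) lamEps)
    (hmemEps : MemLp (fun p : S × T => ℓd p.2 (fcomb h lamEps p.1)) 2 P) :
    (∀ j, ∫ p, ℓd p.2 (fstar p.1) * h j p.1 ∂P = 0) ∧
    (∀ fbar : S → ℝ, Measurable fbar → (∀ x, |fbar x| ≤ M) →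
      ∀ hmembar : MemLp (fun p : S × T => ℓd p.2 (fbar p.1)) 2 P,
        hmembar.toLp (fun p : S × T => ℓd p.2 (fbar p.1)) ∈
          (Submodule.span ℝ
            (Set.range fun j => (hmemh j).toLp (fun p : S × T => h j p.1)))ᗮ →
        ‖projFin
            (Submodule.span ℝ
              (Set.range fun j => (hmemh j).toLp (fun p : S × T => h j p.1)))
            (FiniteDimensional.span_of_finite ℝ (Set.finite_range _))
            (hmemEps.toLp (fun p : S × T => ℓd p.2 (fcomb h lamEps p.1)))‖ ≤
          C * l2norm (P.map Prod.fst) (fun x => fcomb h lamEps x - fbar x)) :=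
  statement15_general ℓ ℓd ℓdd hloss hmeas C hLip P h hhm hhb hmemh M fstar hfm hfb hfmin lamEps
    hmemEps

end EntropySparse
end

section
/- For any vector w ∈ ℝ^N and any λ ∈ Λ, the alignment coefficient satisfies a_H(Λ,λ,w) ≤ ‖w‖_H := sup{⟨w,u⟩_{ℓ₂} : u ∈ ℝ^N, ‖H^{1/2}u‖_{ℓ₂} = 1}, and if H is nonsingular then ‖w‖_H = ‖H^{−1/2}w‖_{ℓ₂}. Moreover, if J := supp(w), then ‖w‖_H ≤ ‖w‖_{ℓ₂}/√(κ(J)·(1 − ρ²(J))) ≤ ‖w‖_{ℓ∞}·√(d(J))/√(κ(J)·(1 − ρ²(J))), where d(J) := card(J), κ(J) is the minimal eigenvalue of the Gram submatrix H_J := (⟨h_i,h_j⟩_{L₂(Π)})_{i,j∈J}, and ρ(J) := sup{⟨f₁,f₂⟩_{L₂(Π)}/(‖f₁‖_{L₂(Π)}·‖f₂‖_{L₂(Π)}) : f₁ ∈ L_J, f₂ ∈ L_{J^c}} with L_J the linear span of {h_j : j ∈ J} (assume κ(J) > 0 and ρ(J) < 1). -/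
/-!
Everything is transported to the Gram matrix `H`, via `∫ f_u f_v dΠ = ⟨u, H v⟩`.
The tangent cone only shrinks the set whose supremum defines `a_H`, so `a_H ≤ ‖w‖_H`.
With `R = H^{1/2}` symmetric and invertible, `⟨w, u⟩ = ⟨R⁻¹ w, R u⟩` turns `‖w‖_H` into the
supremum of a linear functional over the Euclidean unit sphere. For the bound split
`u = u_J + u_{Jᶜ}`: only `u_J` meets `w`, the correlation bound gives
`1 = ‖f_u‖² ≥ (1 - ρ²) ‖f_{u_J}‖²`, the smallest eigenvalue of `H_J` gives
`‖f_{u_J}‖² ≥ κ ‖u_J‖²`, and Cauchy–Schwarz finishes.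
-/

open MeasureTheory Real Finset
open scoped BigOperators

namespace EntropySparse

def tangentCone {N : ℕ} (lam : Fin N → ℝ) : Set (Fin N → ℝ) :=
  {v | ∃ t : ℝ, 0 < t ∧ lam + t • v ∈ simplex N}

noncomputable def alignCoef {S : Type*} [MeasurableSpace S] (μ : Measure S) {N : ℕ}
    (h : Fin N → S → ℝ) (lam w : Fin N → ℝ) : ℝ :=
  sSup {r | ∃ u ∈ tangentCone lam, l2norm μ (fcomb h u) = 1 ∧ r = ∑ j, w j * u j}

/-- The positive semidefinite square root of a positive semidefinite matrix, as
`Matrix.PosSemidef.sqrt` was defined in the older Mathlib. -/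
noncomputable def posSemidefSqrt {n : Type*} [Fintype n] [DecidableEq n]
    {A : Matrix n n ℝ} (hA : A.PosSemidef) : Matrix n n ℝ :=
  (hA.1.eigenvectorUnitary : Matrix n n ℝ) *
    Matrix.diagonal ((RCLike.ofReal : ℝ → ℝ) ∘ (√·) ∘ hA.1.eigenvalues) *
    (star hA.1.eigenvectorUnitary : Matrix n n ℝ)

open Matrix

section Gram

variable {S : Type*} [MeasurableSpace S] {N : ℕ}

noncomputable def gramMatrix (μ : Measure S) (h : Fin N → S → ℝ) : Matrix (Fin N) (Fin N) ℝ :=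
  Matrix.of fun i j => ∫ x, h i x * h j x ∂μ

lemma integral_fcomb_mul_fcomb {μ : Measure S} [IsFiniteMeasure μ] {h : Fin N → S → ℝ}
    (hm : ∀ j, Measurable (h j)) (hb : ∀ j x, |h j x| ≤ 1) (u v : Fin N → ℝ) :
    ∫ x, fcomb h u x * fcomb h v x ∂μ = u ⬝ᵥ gramMatrix μ h *ᵥ v := by
  have hint : ∀ i j, Integrable (fun x => u i * v j * (h i x * h j x)) μ := fun i j =>
    (Integrable.mono' (integrable_const 1) ((hm i).mul (hm j)).aestronglyMeasurable
      (ae_of_all _ fun x => by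
        simpa [abs_mul] using mul_le_one₀ (hb i x) (abs_nonneg _) (hb j x))).const_mul _
  have hpt : ∀ x, fcomb h u x * fcomb h v x = ∑ i, ∑ j, u i * v j * (h i x * h j x) := fun x => by
    simp only [fcomb, sum_mul_sum]
    exact sum_congr rfl fun i _ => sum_congr rfl fun j _ => by ring
  simp only [hpt]
  rw [integral_finsetSum _ fun i _ => integrable_finsetSum _ fun j _ => hint i j]
  simp only [integral_finsetSum _ fun j _ => hint _ j, integral_const_mul, dotProduct, mulVec,
    gramMatrix, of_apply, mul_sum]
  exact sum_congr rfl fun i _ => sum_congr rfl fun j _ => by ring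

lemma l2norm_fcomb {μ : Measure S} [IsFiniteMeasure μ] {h : Fin N → S → ℝ}
    (hm : ∀ j, Measurable (h j)) (hb : ∀ j x, |h j x| ≤ 1) (u : Fin N → ℝ) :
    l2norm μ (fcomb h u) = √(u ⬝ᵥ gramMatrix μ h *ᵥ u) := by
  simp only [l2norm, l2sq, sq, integral_fcomb_mul_fcomb hm hb]

end Gram

section SquareRoot

variable {n : Type*} [Fintype n] [DecidableEq n] {A : Matrix n n ℝ}

lemma posSemidefSqrt_mul_self (hA : A.PosSemidef) : posSemidefSqrt hA * posSemidefSqrt hA = A := by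
  set U : Matrix n n ℝ := (hA.1.eigenvectorUnitary : Matrix n n ℝ)
  have hUU : star U * U = 1 := Unitary.coe_star_mul_self _
  have hDD : diagonal ((RCLike.ofReal : ℝ → ℝ) ∘ (√·) ∘ hA.1.eigenvalues) *
      diagonal ((RCLike.ofReal : ℝ → ℝ) ∘ (√·) ∘ hA.1.eigenvalues) =
      diagonal ((RCLike.ofReal : ℝ → ℝ) ∘ hA.1.eigenvalues) := by
    rw [diagonal_mul_diagonal]
    congr 1 with i
    simp [Real.mul_self_sqrt (hA.eigenvalues_nonneg i)]
  conv_rhs => rw [hA.1.spectral_theorem, Unitary.conjStarAlgAut_apply, ← hDD]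
  simp only [posSemidefSqrt, Matrix.mul_assoc]
  rw [← Matrix.mul_assoc (star U) U, hUU, Matrix.one_mul]

lemma posSemidefSqrt_transpose (hA : A.PosSemidef) : (posSemidefSqrt hA)ᵀ = posSemidefSqrt hA := by
  rw [← conjTranspose_eq_transpose_of_trivial]
  simp [posSemidefSqrt, Matrix.mul_assoc, star_eq_conjTranspose]

lemma dotProduct_mulVec_eq_posSemidefSqrt (hA : A.PosSemidef) (u v : n → ℝ) :
    u ⬝ᵥ A *ᵥ v = (posSemidefSqrt hA *ᵥ u) ⬝ᵥ (posSemidefSqrt hA *ᵥ v) := by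
  conv_lhs => rw [← posSemidefSqrt_mul_self hA, ← mulVec_mulVec, dotProduct_mulVec,
    ← mulVec_transpose, posSemidefSqrt_transpose]

lemma isUnit_det_posSemidefSqrt (hA : A.PosSemidef) (hdet : IsUnit A.det) :
    IsUnit (posSemidefSqrt hA).det := by
  rw [← posSemidefSqrt_mul_self hA, det_mul] at hdet
  exact isUnit_of_mul_isUnit_left hdet

end SquareRoot

section QuadraticForm

variable {n : Type*} [Fintype n] {A : Matrix n n ℝ}

lemma dotProduct_self_eq_sum_sq (z : n → ℝ) : z ⬝ᵥ z = ∑ j, z j ^ 2 := by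
  simp [dotProduct, sq]

lemma dotProduct_mulVec_self_nonneg (hA : A.PosSemidef) (u : n → ℝ) : 0 ≤ u ⬝ᵥ A *ᵥ u := by
  simpa using hA.dotProduct_mulVec_nonneg u

lemma dotProduct_mulVec_comm (hA : A.IsHermitian) (u v : n → ℝ) :
    u ⬝ᵥ A *ᵥ v = v ⬝ᵥ A *ᵥ u := by
  rw [dotProduct_mulVec, ← mulVec_transpose, ← conjTranspose_eq_transpose_of_trivial, hA.eq,
    dotProduct_comm]

lemma abs_dotProduct_mulVec_le (hA : A.PosSemidef) (u v : n → ℝ) :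
    |u ⬝ᵥ A *ᵥ v| ≤ √(u ⬝ᵥ A *ᵥ u) * √(v ⬝ᵥ A *ᵥ v) := by
  classical
  rw [← Real.sqrt_mul (dotProduct_mulVec_self_nonneg hA u)]
  refine Real.abs_le_sqrt ?_
  simp only [dotProduct_mulVec_eq_posSemidefSqrt hA, dotProduct_self_eq_sum_sq]
  exact sum_mul_sq_le_sq_mul_sq univ _ _

/-- With `a, b` the `A`-norms of `u, v`: `a² - 2ρab + b² ≥ (1 - ρ²) a²`. -/
lemma one_sub_sq_mul_le_dotProduct_mulVec_add (hA : A.PosSemidef) {ρ : ℝ} {u v : n → ℝ}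
    (huv : -(u ⬝ᵥ A *ᵥ v) ≤ ρ * (√(u ⬝ᵥ A *ᵥ u) * √(v ⬝ᵥ A *ᵥ v))) :
    (1 - ρ ^ 2) * (u ⬝ᵥ A *ᵥ u) ≤ (u + v) ⬝ᵥ A *ᵥ (u + v) := by
  have hexpand : (u + v) ⬝ᵥ A *ᵥ (u + v) =
      u ⬝ᵥ A *ᵥ u + 2 * (u ⬝ᵥ A *ᵥ v) + v ⬝ᵥ A *ᵥ v := by
    simp only [add_dotProduct, mulVec_add, dotProduct_add, dotProduct_mulVec_comm hA.1 v u]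
    ring
  have ha := Real.sq_sqrt (dotProduct_mulVec_self_nonneg hA u)
  have hb := Real.sq_sqrt (dotProduct_mulVec_self_nonneg hA v)
  rw [hexpand]
  nlinarith [sq_nonneg (√(v ⬝ᵥ A *ᵥ v) - ρ * √(u ⬝ᵥ A *ᵥ u))]

end QuadraticForm

section Eigenvalues

variable {n : Type*} [Fintype n] [DecidableEq n] {A : Matrix n n ℝ}

lemma _root_.Matrix.IsHermitian.posSemidef_sub_smul_one (hA : A.IsHermitian) {c : ℝ}
    (hc : ∀ i, c ≤ hA.eigenvalues i) : (A - c • 1).PosSemidef := by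
  have hshift : A - c • 1 = Unitary.conjStarAlgAut ℝ _ hA.eigenvectorUnitary
      (diagonal (fun i => hA.eigenvalues i - c)) := by
    rw [← diagonal_sub, ← smul_one_eq_diagonal, map_sub, map_smul, map_one]
    exact congrArg (· - c • 1) hA.spectral_theorem
  rw [hshift, Unitary.conjStarAlgAut_apply, star_eq_conjTranspose]
  exact (posSemidef_diagonal_iff.mpr fun i => sub_nonneg.mpr (hc i)).mul_mul_conjTranspose_same _

lemma _root_.Matrix.IsHermitian.sInf_eigenvalues_mul_le (hA : A.IsHermitian) (y : n → ℝ) :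
    sInf (Set.range hA.eigenvalues) * ∑ i, y i ^ 2 ≤ y ⬝ᵥ A *ᵥ y := by
  have hpsd := hA.posSemidef_sub_smul_one fun i =>
    csInf_le (Set.finite_range _).bddBelow ⟨i, rfl⟩
  have := dotProduct_mulVec_self_nonneg hpsd y
  rw [sub_mulVec, dotProduct_sub, smul_mulVec, one_mulVec, dotProduct_smul, smul_eq_mul,
    dotProduct_self_eq_sum_sq] at this
  linarith

end Eigenvalues

section Support

variable {n : Type*} [Fintype n] {J : Finset n}

lemma sum_eq_sum_coe_of_support {f : n → ℝ} (hf : ∀ j, j ∉ J → f j = 0) :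
    ∑ j, f j = ∑ j : J, f j := by
  rw [sum_coe_sort]
  exact (sum_subset (subset_univ J) fun j _ hj => hf j hj).symm

lemma dotProduct_mulVec_eq_submatrix_of_support (A : Matrix n n ℝ) {u : n → ℝ}
    (hu : ∀ j, j ∉ J → u j = 0) :
    u ⬝ᵥ A *ᵥ u = (fun i : J => u i) ⬝ᵥ A.submatrix (↑) (↑) *ᵥ (fun i : J => u i) := by
  simp only [dotProduct, mulVec, submatrix_apply]
  rw [sum_eq_sum_coe_of_support fun j hj => by rw [hu j hj, zero_mul]]
  congr 1 with i
  rw [sum_eq_sum_coe_of_support fun j hj => by rw [hu j hj, mul_zero]]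

end Support

section DualNorm

variable {n : Type*} [Fintype n] {A : Matrix n n ℝ}

/-- The norm `‖w‖_H` of the paper, with the constraint `‖H^{1/2} u‖ = 1` written as
`⟨H u, u⟩ = 1`. -/
noncomputable def dualNorm (A : Matrix n n ℝ) (w : n → ℝ) : ℝ :=
  sSup {r | ∃ u : n → ℝ, u ⬝ᵥ A *ᵥ u = 1 ∧ r = w ⬝ᵥ u}

lemma dualNorm_nonneg (A : Matrix n n ℝ) (w : n → ℝ) : 0 ≤ dualNorm A w := by
  obtain hempty | ⟨r, u, hu, -⟩ :=
    Set.eq_empty_or_nonempty {r | ∃ u : n → ℝ, u ⬝ᵥ A *ᵥ u = 1 ∧ r = w ⬝ᵥ u}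
  · rw [dualNorm, hempty, Real.sSup_empty]
  refine Real.sSup_nonneg' ?_
  rcases le_total 0 (w ⬝ᵥ u) with h | h
  · exact ⟨_, ⟨u, hu, rfl⟩, h⟩
  · have hu' : -u ⬝ᵥ A *ᵥ -u = 1 := by rwa [neg_dotProduct, mulVec_neg, dotProduct_neg, neg_neg]
    exact ⟨_, ⟨-u, hu', rfl⟩, by simpa using h⟩

lemma dualNorm_le {w : n → ℝ} {B : ℝ} (hB : ∀ u, u ⬝ᵥ A *ᵥ u = 1 → w ⬝ᵥ u ≤ B) (hB0 : 0 ≤ B) :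
    dualNorm A w ≤ B :=
  Real.sSup_le (fun _ ⟨u, hu, hr⟩ => hr ▸ hB u hu) hB0

lemma sSup_le_dualNorm (T : Set (n → ℝ)) {w : n → ℝ} {B : ℝ}
    (hB : ∀ u, u ⬝ᵥ A *ᵥ u = 1 → w ⬝ᵥ u ≤ B) :
    sSup {r | ∃ u ∈ T, u ⬝ᵥ A *ᵥ u = 1 ∧ r = w ⬝ᵥ u} ≤ dualNorm A w :=
  Real.sSup_le
    (fun _ ⟨u, _, hu, hr⟩ => le_csSup ⟨B, fun _ ⟨v, hv, hr⟩ => hr ▸ hB v hv⟩ ⟨u, hu, hr⟩)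
    (dualNorm_nonneg A w)

lemma sSup_dotProduct_sphere (a : n → ℝ) :
    sSup {r | ∃ z : n → ℝ, ∑ j, z j ^ 2 = 1 ∧ r = a ⬝ᵥ z} = √(∑ j, a j ^ 2) := by
  classical
  set s := √(∑ j, a j ^ 2)
  rcases isEmpty_or_nonempty n with _ | ⟨⟨i⟩⟩
  · simp [s]
  refine IsGreatest.csSup_eq ⟨?_, fun _ ⟨z, hz, hr⟩ => ?_⟩
  · obtain hs | hs := (show 0 ≤ s from Real.sqrt_nonneg _).eq_or_lt
    · have ha : a i = 0 := by
        have hsum := (Real.sqrt_eq_zero (by positivity)).mp hs.symm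
        exact pow_eq_zero_iff two_ne_zero |>.mp
          (congrFun ((Fintype.sum_eq_zero_iff_of_nonneg fun j => sq_nonneg (a j)).mp hsum) i)
      exact ⟨Pi.single i 1, by simp [Pi.single_apply], by simp [ha, ← hs]⟩
    · have hss : s ^ 2 = ∑ j, a j ^ 2 := Real.sq_sqrt (by positivity)
      refine ⟨s⁻¹ • a, ?_, ?_⟩
      · simp only [Pi.smul_apply, smul_eq_mul, mul_pow, ← mul_sum, ← hss]
        field_simp
      · rw [dotProduct_smul, dotProduct_self_eq_sum_sq, ← hss, smul_eq_mul]
        field_simp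
  · have := Real.sum_mul_le_sqrt_mul_sqrt univ a z
    rw [hz, Real.sqrt_one, mul_one] at this
    exact hr ▸ this

lemma dualNorm_eq_of_isUnit_det [DecidableEq n] (hA : A.PosSemidef) (hdet : IsUnit A.det)
    (w : n → ℝ) : dualNorm A w = √(∑ j, ((posSemidefSqrt hA)⁻¹ *ᵥ w) j ^ 2) := by
  set R := posSemidefSqrt hA
  have hRR : R * R⁻¹ = 1 := mul_nonsing_inv R (isUnit_det_posSemidefSqrt hA hdet)
  have hdot : ∀ u, w ⬝ᵥ u = (R⁻¹ *ᵥ w) ⬝ᵥ (R *ᵥ u) := fun u => by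
    rw [dotProduct_mulVec, ← mulVec_transpose, posSemidefSqrt_transpose, mulVec_mulVec, hRR,
      one_mulVec]
  rw [← sSup_dotProduct_sphere, dualNorm]
  congr 1 with r
  constructor
  · rintro ⟨u, hu, rfl⟩
    refine ⟨R *ᵥ u, ?_, hdot u⟩
    rwa [← dotProduct_self_eq_sum_sq, ← dotProduct_mulVec_eq_posSemidefSqrt]
  · rintro ⟨z, hz, rfl⟩
    have hz' : R *ᵥ R⁻¹ *ᵥ z = z := by rw [mulVec_mulVec, hRR, one_mulVec]
    refine ⟨R⁻¹ *ᵥ z, ?_, ?_⟩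
    · rwa [dotProduct_mulVec_eq_posSemidefSqrt hA, hz', dotProduct_self_eq_sum_sq]
    · rw [hdot, hz']

end DualNorm

section CanonicalCorrelation

variable {n : Type*} [Fintype n] {A : Matrix n n ℝ} {J : Finset n}

/-- The coefficient `ρ(J)` of the paper, expressed through the Gram matrix: `f_u ∈ L_J` and
`f_v ∈ L_{Jᶜ}` are parametrised by coefficient vectors supported on `J` and off `J`. -/
noncomputable def canonicalCorr (A : Matrix n n ℝ) (J : Finset n) : ℝ :=
  sSup {r | ∃ u v : n → ℝ, (∀ j, j ∉ J → u j = 0) ∧ (∀ j, j ∈ J → v j = 0) ∧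
    r = u ⬝ᵥ A *ᵥ v / (√(u ⬝ᵥ A *ᵥ u) * √(v ⬝ᵥ A *ᵥ v))}

lemma canonicalCorr_nonneg (A : Matrix n n ℝ) (J : Finset n) : 0 ≤ canonicalCorr A J :=
  Real.sSup_nonneg' ⟨0, ⟨0, 0, fun _ _ => rfl, fun _ _ => rfl, by simp⟩, le_rfl⟩

lemma neg_dotProduct_mulVec_le_canonicalCorr_mul (hA : A.PosSemidef) {u v : n → ℝ}
    (hu : ∀ j, j ∉ J → u j = 0) (hv : ∀ j, j ∈ J → v j = 0) :
    -(u ⬝ᵥ A *ᵥ v) ≤ canonicalCorr A J * (√(u ⬝ᵥ A *ᵥ u) * √(v ⬝ᵥ A *ᵥ v)) := by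
  have hbdd : BddAbove {r | ∃ u v : n → ℝ, (∀ j, j ∉ J → u j = 0) ∧ (∀ j, j ∈ J → v j = 0) ∧
      r = u ⬝ᵥ A *ᵥ v / (√(u ⬝ᵥ A *ᵥ u) * √(v ⬝ᵥ A *ᵥ v))} :=
    ⟨1, fun _ ⟨u, v, _, _, hr⟩ => hr ▸ div_le_one_of_le₀
      ((le_abs_self _).trans (abs_dotProduct_mulVec_le hA u v)) (by positivity)⟩
  set d := √(u ⬝ᵥ A *ᵥ u) * √(v ⬝ᵥ A *ᵥ v)
  obtain hd | hd := (show 0 ≤ d by positivity).eq_or_lt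
  · have huv : u ⬝ᵥ A *ᵥ v = 0 :=
      abs_nonpos_iff.mp (hd ▸ abs_dotProduct_mulVec_le hA u v)
    simp [huv, ← hd]
  · have hmem := le_csSup hbdd ⟨-u, v, fun j hj => by simp [hu j hj], hv, rfl⟩
    simp only [neg_dotProduct, mulVec_neg, dotProduct_neg, neg_neg] at hmem
    calc -(u ⬝ᵥ A *ᵥ v) = -(u ⬝ᵥ A *ᵥ v) / d * d := (div_mul_cancel₀ _ hd.ne').symm
      _ ≤ canonicalCorr A J * d := mul_le_mul_of_nonneg_right hmem hd.le

lemma dotProduct_le_div_sqrt_of_canonicalCorr_lt_one (hA : A.PosSemidef) {κ : ℝ} (hκ : 0 < κ)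
    (hκJ : ∀ u : n → ℝ, (∀ j, j ∉ J → u j = 0) → κ * ∑ j, u j ^ 2 ≤ u ⬝ᵥ A *ᵥ u)
    (hρ : canonicalCorr A J < 1) {w : n → ℝ} (hw : ∀ j, j ∉ J → w j = 0)
    (u : n → ℝ) (hu : u ⬝ᵥ A *ᵥ u = 1) :
    w ⬝ᵥ u ≤ √(∑ j, w j ^ 2) / √(κ * (1 - canonicalCorr A J ^ 2)) := by
  classical
  set ρ := canonicalCorr A J
  set u₁ := (J : Set n).indicator u
  set u₂ := (J : Set n)ᶜ.indicator u
  have hu₁ : ∀ j, j ∉ J → u₁ j = 0 := fun j hj => Set.indicator_of_notMem (by simpa) u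
  have hu₂ : ∀ j, j ∈ J → u₂ j = 0 := fun j hj => Set.indicator_of_notMem (by simpa) u
  have hρ' : 0 < 1 - ρ ^ 2 := by nlinarith [canonicalCorr_nonneg A J]
  have hwu : w ⬝ᵥ u = w ⬝ᵥ u₁ := by
    have hwu₂ : w ⬝ᵥ u₂ = 0 := sum_eq_zero fun j _ => by
      by_cases hj : j ∈ J <;> simp [hj, hu₂ j, hw j]
    rw [← Set.indicator_self_add_compl (J : Set n) u, dotProduct_add, hwu₂, add_zero]
  have hnorm₁ : (1 - ρ ^ 2) * (u₁ ⬝ᵥ A *ᵥ u₁) ≤ 1 := by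
    have := one_sub_sq_mul_le_dotProduct_mulVec_add hA
      (neg_dotProduct_mulVec_le_canonicalCorr_mul hA hu₁ hu₂)
    rwa [Set.indicator_self_add_compl, hu] at this
  have hsum : ∑ j, u₁ j ^ 2 ≤ 1 / (κ * (1 - ρ ^ 2)) := by
    rw [le_div_iff₀ (mul_pos hκ hρ')]
    nlinarith [mul_le_mul_of_nonneg_left (hκJ u₁ hu₁) hρ'.le]
  calc w ⬝ᵥ u = w ⬝ᵥ u₁ := hwu
    _ ≤ √(∑ j, w j ^ 2) * √(∑ j, u₁ j ^ 2) := Real.sum_mul_le_sqrt_mul_sqrt _ _ _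
    _ ≤ √(∑ j, w j ^ 2) * √(1 / (κ * (1 - ρ ^ 2))) := by gcongr
    _ = √(∑ j, w j ^ 2) / √(κ * (1 - ρ ^ 2)) := by
      rw [one_div, Real.sqrt_inv, div_eq_mul_inv]

end CanonicalCorrelation

lemma sqrt_sum_sq_le_sSup_abs_mul_sqrt_card {n : Type*} [Fintype n] {J : Finset n}
    {w : n → ℝ} (hw : ∀ j, j ∉ J → w j = 0) :
    √(∑ j, w j ^ 2) ≤ sSup (Set.range fun j => |w j|) * √(#J : ℝ) := by
  set M := sSup (Set.range fun j => |w j|)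
  have hM : ∀ j, |w j| ≤ M := fun j => le_csSup (Set.finite_range _).bddAbove ⟨j, rfl⟩
  have hM0 : 0 ≤ M := Real.sSup_nonneg (by rintro _ ⟨j, rfl⟩; exact abs_nonneg _)
  calc √(∑ j, w j ^ 2) = √(∑ j ∈ J, w j ^ 2) := by
        rw [sum_subset (subset_univ J) fun j _ hj => by simp [hw j hj]]
    _ ≤ √(∑ _j ∈ J, M ^ 2) := by
        refine Real.sqrt_le_sqrt (sum_le_sum fun j _ => ?_)
        simpa using pow_le_pow_left₀ (abs_nonneg _) (hM j) 2
    _ = M * √(#J : ℝ) := by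
        rw [sum_const, nsmul_eq_mul, Real.sqrt_mul (by positivity), Real.sqrt_sq hM0, mul_comm]

theorem statement16_general {S : Type*} [MeasurableSpace S] (Pim : Measure S) [IsProbabilityMeasure Pim]
    {N : ℕ} (h : Fin N → S → ℝ) (hhm : ∀ j, Measurable (h j)) (hhb : ∀ j x, |h j x| ≤ 1)
    (H : Matrix (Fin N) (Fin N) ℝ)
    (hHdef : H = Matrix.of fun i j => ∫ x, h i x * h j x ∂Pim)
    (hH : H.PosSemidef)
    (w lam : Fin N → ℝ)
    (J : Finset (Fin N)) (hJ : ∀ j, w j ≠ 0 ↔ j ∈ J)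
    (wH κ ρ : ℝ)
    (hwH : wH = sSup {r | ∃ u : Fin N → ℝ, l2norm Pim (fcomb h u) = 1 ∧ r = ∑ j, w j * u j})
    (hκ : κ = sInf (Set.range
      ((hH.1.submatrix (fun x : {x // x ∈ J} => (x : Fin N))).eigenvalues)))
    (hρ : ρ = sSup {r | ∃ u v : Fin N → ℝ,
        (∀ j, j ∉ J → u j = 0) ∧ (∀ j, j ∈ J → v j = 0) ∧
        r = (∫ x, fcomb h u x * fcomb h v x ∂Pim)
          / (l2norm Pim (fcomb h u) * l2norm Pim (fcomb h v))})
    (hκpos : 0 < κ) (hρlt : ρ < 1) :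
    alignCoef Pim h lam w ≤ wH ∧
    (IsUnit H.det →
      wH = Real.sqrt (∑ j, ((((posSemidefSqrt hH)⁻¹).mulVec w) j) ^ 2)) ∧
    wH ≤ Real.sqrt (∑ j, (w j) ^ 2) / Real.sqrt (κ * (1 - ρ ^ 2)) ∧
    Real.sqrt (∑ j, (w j) ^ 2) / Real.sqrt (κ * (1 - ρ ^ 2)) ≤
      (sSup (Set.range fun j => |w j|)) * Real.sqrt (J.card : ℝ)
        / Real.sqrt (κ * (1 - ρ ^ 2)) := by
  have hnorm : ∀ u, l2norm Pim (fcomb h u) = √(u ⬝ᵥ H *ᵥ u) := hHdef ▸ l2norm_fcomb hhm hhb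
  have hbil : ∀ u v, ∫ x, fcomb h u x * fcomb h v x ∂Pim = u ⬝ᵥ H *ᵥ v :=
    hHdef ▸ integral_fcomb_mul_fcomb hhm hhb
  simp only [hbil, hnorm, Real.sqrt_eq_one] at hwH hρ
  replace hwH : wH = dualNorm H w := hwH
  replace hρ : ρ = canonicalCorr H J := hρ
  subst hwH hρ
  have hκJ (u : Fin N → ℝ) (hu : ∀ j, j ∉ J → u j = 0) : κ * ∑ j, u j ^ 2 ≤ u ⬝ᵥ H *ᵥ u := by
    rw [dotProduct_mulVec_eq_submatrix_of_support H hu,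
      sum_eq_sum_coe_of_support fun j hj => by simp [hu j hj], hκ]
    exact (hH.1.submatrix _).sInf_eigenvalues_mul_le _
  have hwJ (j : Fin N) (hj : j ∉ J) : w j = 0 := not_not.mp (mt (hJ j).mp hj)
  have hbound := dotProduct_le_div_sqrt_of_canonicalCorr_lt_one hH hκpos hκJ hρlt hwJ
  refine ⟨?_, fun hdet => dualNorm_eq_of_isUnit_det hH hdet w,
    dualNorm_le hbound (by positivity),
    div_le_div_of_nonneg_right (sqrt_sum_sq_le_sSup_abs_mul_sqrt_card hwJ) (Real.sqrt_nonneg _)⟩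
  simp only [alignCoef, hnorm, Real.sqrt_eq_one]
  exact sSup_le_dualNorm _ hbound

/-- Upper bounds for the alignment coefficient in terms of the Gram matrix `H` of the
dictionary: `a_H(Λ,λ,w) ≤ ‖w‖_H`, `‖w‖_H = ‖H^{−1/2}w‖_{ℓ₂}` when `H` is nonsingular,
and `‖w‖_H ≤ ‖w‖_{ℓ₂}/√(κ(J)(1−ρ²(J))) ≤ ‖w‖_{ℓ∞}√(d(J))/√(κ(J)(1−ρ²(J)))` for
`J = supp(w)`. -/
theorem statement16 {S : Type*} [MeasurableSpace S] (Pim : Measure S) [IsProbabilityMeasure Pim]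
    {N : ℕ} (h : Fin N → S → ℝ) (hhm : ∀ j, Measurable (h j)) (hhb : ∀ j x, |h j x| ≤ 1)
    (H : Matrix (Fin N) (Fin N) ℝ)
    (hHdef : H = Matrix.of fun i j => ∫ x, h i x * h j x ∂Pim)
    (hH : H.PosSemidef)
    (w lam : Fin N → ℝ) (hlam : lam ∈ simplex N)
    (J : Finset (Fin N)) (hJ : ∀ j, w j ≠ 0 ↔ j ∈ J)
    (wH κ ρ : ℝ)
    (hwH : wH = sSup {r | ∃ u : Fin N → ℝ, l2norm Pim (fcomb h u) = 1 ∧ r = ∑ j, w j * u j})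
    (hκ : κ = sInf (Set.range
      ((hH.1.submatrix (fun x : {x // x ∈ J} => (x : Fin N))).eigenvalues)))
    (hρ : ρ = sSup {r | ∃ u v : Fin N → ℝ,
        (∀ j, j ∉ J → u j = 0) ∧ (∀ j, j ∈ J → v j = 0) ∧
        r = (∫ x, fcomb h u x * fcomb h v x ∂Pim)
          / (l2norm Pim (fcomb h u) * l2norm Pim (fcomb h v))})
    (hκpos : 0 < κ) (hρlt : ρ < 1) :
    alignCoef Pim h lam w ≤ wH ∧
    (IsUnit H.det →
      wH = Real.sqrt (∑ j, ((((posSemidefSqrt hH)⁻¹).mulVec w) j) ^ 2)) ∧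
    wH ≤ Real.sqrt (∑ j, (w j) ^ 2) / Real.sqrt (κ * (1 - ρ ^ 2)) ∧
    Real.sqrt (∑ j, (w j) ^ 2) / Real.sqrt (κ * (1 - ρ ^ 2)) ≤
      (sSup (Set.range fun j => |w j|)) * Real.sqrt (J.card : ℝ)
        / Real.sqrt (κ * (1 - ρ ^ 2)) :=
  statement16_general Pim h hhm hhb H hHdef hH w lam J hJ wH κ ρ hwH hκ hρ hκpos hρlt

end EntropySparse
end
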